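/- Let m ≥ 1, r > 0, and let X, X' ∈ ℝ^m with ‖X' − X‖₂ ≤ r. Let x, x' ∈ ℝ^m, M ∈ ℝ^{m×m}, c ∈ ℝ^m, and fix an index j ∈ {1,…,m}. Set a = ∑_{i=1}^m M_{i,j} x_i + c_j and a' = ∑_{i=1}^m M_{i,j} x'_i + c_j. Suppose there are flags P : {1,…,m} → {0,1}, a matrix L ∈ ℝ^{m×m} with rows L_i, a vector d ∈ ℝ^m, and nonnegative bounds U ∈ ℝ^m such that: (i) for every i with P_i = 0, x_i = ∑_{l=1}^m L_{i,l} X_l + d_i and x'_i = ∑_{l=1}^m L_{i,l} X'_l + d_i; (ii) for every i, |x'_i − x_i| ≤ U_i. If a > 0, then |max(a', 0) − max(a, 0)| ≤ ∑_{i : P_i = 1} |M_{i,j}| · U_i + r · ‖∑_{i : P_i = 0} M_{i,j} · L_i‖₂. -/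

import Mathlib

open Finset RealInnerProductSpace

/-
ReLU is 1-Lipschitz, so it suffices to bound the pre-activation gap
`a' - a = ∑ i, M i j (x'_i - x_i)`. Split this sum by the flags: on neurons with `P i = 1` only the
bounds `U i` are known, giving the first term; on neurons with `P i = 0` both values are the same
affine function of the input, so their contribution is the linear form `⟪∑ M i j • L i, X' - X⟫`,
which Cauchy–Schwarz bounds by `r * ‖∑ M i j • L i‖`.
-/

theorem EuclideanSpace.sum_mul_eq_inner {ι : Type*} [Fintype ι] (u v : EuclideanSpace ℝ ι) :
    ∑ l, u l * v l = ⟪u, v⟫ := by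
  simp [EuclideanSpace.inner_eq_star_dotProduct, dotProduct, mul_comm]

section

variable {ι : Type*}

theorem abs_sum_mul_le_sum_abs_mul (s : Finset ι) (w δ U : ι → ℝ)
    (h : ∀ i ∈ s, |δ i| ≤ U i) :
    |∑ i ∈ s, w i * δ i| ≤ ∑ i ∈ s, |w i| * U i :=
  (abs_sum_le_sum_abs _ _).trans <| sum_le_sum fun i hi => by
    rw [abs_mul]
    exact mul_le_mul_of_nonneg_left (h i hi) (abs_nonneg _)

variable {E : Type*} [NormedAddCommGroup E] [InnerProductSpace ℝ E]

theorem sum_mul_sub_eq_inner_of_affine (s : Finset ι) (w d y y' : ι → ℝ) (L : ι → E)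
    (X X' : E)
    (h : ∀ i ∈ s, y i = ⟪L i, X⟫ + d i ∧ y' i = ⟪L i, X'⟫ + d i) :
    ∑ i ∈ s, w i * (y' i - y i) = ⟪∑ i ∈ s, w i • L i, X' - X⟫ := by
  rw [sum_inner]
  refine sum_congr rfl fun i hi => ?_
  rw [(h i hi).1, (h i hi).2, real_inner_smul_left, inner_sub_right]
  ring

theorem abs_sum_mul_sub_le_of_affine (s : Finset ι) (w d y y' : ι → ℝ) (L : ι → E)
    (X X' : E) {r : ℝ} (hXX' : ‖X' - X‖ ≤ r)
    (h : ∀ i ∈ s, y i = ⟪L i, X⟫ + d i ∧ y' i = ⟪L i, X'⟫ + d i) :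
    |∑ i ∈ s, w i * (y' i - y i)| ≤ r * ‖∑ i ∈ s, w i • L i‖ := by
  rw [sum_mul_sub_eq_inner_of_affine s w d y y' L X X' h, mul_comm]
  exact (abs_real_inner_le_norm _ _).trans (mul_le_mul_of_nonneg_left hXX' (norm_nonneg _))

theorem sum_eq_sum_filter_eq_one_add_sum_filter_eq_zero [Fintype ι] {M : Type*}
    [AddCommMonoid M] (P : ι → ℕ) (hP : ∀ i, P i = 0 ∨ P i = 1) (f : ι → M) :
    ∑ i, f i =
      ∑ i ∈ univ.filter (fun i => P i = 1), f i + ∑ i ∈ univ.filter (fun i => P i = 0), f i := by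
  rw [← sum_filter_add_sum_filter_not univ (fun i => P i = 1)]
  congr 2
  exact filter_congr fun i _ => by rcases hP i with h | h <;> simp [h]

end

theorem postactivation_bound_active_case_general
    (m : ℕ) (r : ℝ)
    (X X' : EuclideanSpace ℝ (Fin m)) (hXX' : ‖X' - X‖ ≤ r)
    (x x' : Fin m → ℝ) (M : Matrix (Fin m) (Fin m) ℝ) (c : Fin m → ℝ) (j : Fin m)
    (P : Fin m → ℕ) (hP : ∀ i, P i = 0 ∨ P i = 1)
    (L : Fin m → EuclideanSpace ℝ (Fin m)) (d : Fin m → ℝ)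
    (U : Fin m → ℝ)
    (a a' : ℝ)
    (ha : a = (∑ i, M i j * x i) + c j)
    (ha' : a' = (∑ i, M i j * x' i) + c j)
    (haff : ∀ i, P i = 0 →
      x i = (∑ l, L i l * X l) + d i ∧ x' i = (∑ l, L i l * X' l) + d i)
    (hUb : ∀ i, |x' i - x i| ≤ U i) :
    |max a' 0 - max a 0| ≤
      (∑ i ∈ Finset.univ.filter (fun i => P i = 1), |M i j| * U i) +
        r * ‖∑ i ∈ Finset.univ.filter (fun i => P i = 0), M i j • L i‖ := by
  have hgap : a' - a = ∑ i, M i j * (x' i - x i) := by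
    simp only [ha, ha', mul_sub, sum_sub_distrib]
    ring
  have hlin : ∀ i ∈ univ.filter (fun i => P i = 0),
      x i = ⟪L i, X⟫ + d i ∧ x' i = ⟪L i, X'⟫ + d i := fun i hi => by
    simpa only [EuclideanSpace.sum_mul_eq_inner] using haff i (mem_filter.1 hi).2
  calc |max a' 0 - max a 0| ≤ |a' - a| := abs_max_sub_max_le_abs a' a 0
    _ ≤ _ := by
      rw [hgap, sum_eq_sum_filter_eq_one_add_sum_filter_eq_zero P hP]
      exact (abs_add_le _ _).trans <| add_le_add
        (abs_sum_mul_le_sum_abs_mul _ _ _ _ fun i _ => hUb i)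
        (abs_sum_mul_sub_le_of_affine _ _ _ _ _ L X X' hXX' hlin)

/-- The active case of the condition `U(k+1,r)` in the proof of Proposition
4.1: the post-activation perturbation of an active neuron is bounded by the
quantity `U^{k+1}_{r,j}` computed by Algorithm 1. -/
theorem postactivation_bound_active_case
    (m : ℕ) (hm : 1 ≤ m) (r : ℝ) (hr : 0 < r)
    (X X' : EuclideanSpace ℝ (Fin m)) (hXX' : ‖X' - X‖ ≤ r)
    (x x' : Fin m → ℝ) (M : Matrix (Fin m) (Fin m) ℝ) (c : Fin m → ℝ) (j : Fin m)
    (P : Fin m → ℕ) (hP : ∀ i, P i = 0 ∨ P i = 1)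
    (L : Fin m → EuclideanSpace ℝ (Fin m)) (d : Fin m → ℝ)
    (U : Fin m → ℝ) (hU : ∀ i, 0 ≤ U i)
    (a a' : ℝ)
    (ha : a = (∑ i, M i j * x i) + c j)
    (ha' : a' = (∑ i, M i j * x' i) + c j)
    (haff : ∀ i, P i = 0 →
      x i = (∑ l, L i l * X l) + d i ∧ x' i = (∑ l, L i l * X' l) + d i)
    (hUb : ∀ i, |x' i - x i| ≤ U i)
    (hapos : a > 0) :
    |max a' 0 - max a 0| ≤
      (∑ i ∈ Finset.univ.filter (fun i => P i = 1), |M i j| * U i) +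
        r * ‖∑ i ∈ Finset.univ.filter (fun i => P i = 0), M i j • L i‖ :=
  postactivation_bound_active_case_general m r X X' hXX' x x' M c j P hP L d U a a' ha ha' haff hUb
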